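/- arXiv:2203.00873 — 2 statements merged into one kernel-verified Lean document; each statement's English description precedes it below -/
import Mathlib

section
/- With the two-walker quantum-walk setup below, let Q₀ be the projector |↑⟩⟨↑| on C (Q₀ ↑ = ↑, Q₀ ↓ = 0) and let M↑↑ = (Q₀ ⊗ id_W) ⊗ (Q₀ ⊗ id_W) act on (C ⊗ W) ⊗ (C ⊗ W). Then post-selecting the second-step anti-symmetric-coin state gives M↑↑ (𝒰(π/4)² ψ₀⁻) = (1/(2√2)) [ (↑⊗|0⟩)⊗(↑⊗|2⟩) − (↑⊗|2⟩)⊗(↑⊗|0⟩) ], i.e. the (unnormalized) walker state (|0,2⟩ − |2,0⟩)/√2 of Eq. (17), which is anti-symmetric (a singlet in position). -/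
open TensorProduct

set_option maxSynthPendingDepth 5

noncomputable section QuantumWalk

/-- The coin space `C = Fin 2 → ℂ`. -/
abbrev CoinSp : Type := Fin 2 → ℂ

/-- The walker space `W = ℤ →₀ ℂ`. -/
abbrev WalkSp : Type := ℤ →₀ ℂ

/-- Spin up `↑ = e₀`. -/
def up : CoinSp := Pi.single 0 1

/-- Spin down `↓ = e₁`. -/
def dn : CoinSp := Pi.single 1 1

/-- Walker position basis vector `|i⟩ = δ_i`. -/
def ket (i : ℤ) : WalkSp := Finsupp.single i 1

/-- The coin operator `C₁(θ)`, with matrix `[[cos θ, sin θ], [sin θ, -cos θ]]`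
in the basis `(↑, ↓)`. -/
def coinOp (θ : ℝ) : CoinSp →ₗ[ℂ] CoinSp :=
  Matrix.toLin' !![(Real.cos θ : ℂ), (Real.sin θ : ℂ); (Real.sin θ : ℂ), -(Real.cos θ : ℂ)]

/-- The coordinate projector `|↑⟩⟨↑|` on the coin space. -/
def proj0 : CoinSp →ₗ[ℂ] CoinSp := Matrix.toLin' !![1, 0; 0, 0]

/-- The coordinate projector `|↓⟩⟨↓|` on the coin space. -/
def proj1 : CoinSp →ₗ[ℂ] CoinSp := Matrix.toLin' !![0, 0; 0, 1]

/-- The right shift `R |i⟩ = |i+1⟩`. -/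
def Rshift : WalkSp →ₗ[ℂ] WalkSp := Finsupp.lmapDomain ℂ ℂ (fun i => i + 1)

/-- The left shift `L |i⟩ = |i-1⟩`. -/
def Lshift : WalkSp →ₗ[ℂ] WalkSp := Finsupp.lmapDomain ℂ ℂ (fun i => i - 1)

/-- The shift operator `S₁ = |↑⟩⟨↑| ⊗ R + |↓⟩⟨↓| ⊗ L`. -/
def S1 : CoinSp ⊗[ℂ] WalkSp →ₗ[ℂ] CoinSp ⊗[ℂ] WalkSp :=
  TensorProduct.map proj0 Rshift + TensorProduct.map proj1 Lshift

/-- The one-walker step `U(θ) = S₁ ∘ (C₁(θ) ⊗ id)`. -/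
def Ustep (θ : ℝ) : CoinSp ⊗[ℂ] WalkSp →ₗ[ℂ] CoinSp ⊗[ℂ] WalkSp :=
  S1 ∘ₗ TensorProduct.map (coinOp θ) LinearMap.id

/-- The two-walker step `𝒰(θ) = U(θ) ⊗ U(θ)`. -/
def calU (θ : ℝ) : Module.End ℂ ((CoinSp ⊗[ℂ] WalkSp) ⊗[ℂ] (CoinSp ⊗[ℂ] WalkSp)) :=
  TensorProduct.map (Ustep θ) (Ustep θ)

/-- The anti-symmetric initial state
`ψ₀⁻ = (1/√2)((↑⊗|0⟩)⊗(↓⊗|0⟩) - (↓⊗|0⟩)⊗(↑⊗|0⟩))`. -/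
def psiMinus : (CoinSp ⊗[ℂ] WalkSp) ⊗[ℂ] (CoinSp ⊗[ℂ] WalkSp) :=
  ((1 : ℂ) / Real.sqrt 2) •
    ((up ⊗ₜ[ℂ] ket 0) ⊗ₜ[ℂ] (dn ⊗ₜ[ℂ] ket 0) - (dn ⊗ₜ[ℂ] ket 0) ⊗ₜ[ℂ] (up ⊗ₜ[ℂ] ket 0))

/-- The symmetric initial state
`ψ₀⁺ = (1/√2)((↑⊗|0⟩)⊗(↓⊗|0⟩) + (↓⊗|0⟩)⊗(↑⊗|0⟩))`. -/
def psiPlus : (CoinSp ⊗[ℂ] WalkSp) ⊗[ℂ] (CoinSp ⊗[ℂ] WalkSp) :=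
  ((1 : ℂ) / Real.sqrt 2) •
    ((up ⊗ₜ[ℂ] ket 0) ⊗ₜ[ℂ] (dn ⊗ₜ[ℂ] ket 0) + (dn ⊗ₜ[ℂ] ket 0) ⊗ₜ[ℂ] (up ⊗ₜ[ℂ] ket 0))

/-- The local post-selection operator
`M↑↑ = (Q₀ ⊗ id_W) ⊗ (Q₀ ⊗ id_W)`, where `Q₀ = |↑⟩⟨↑|`. -/
def Mupup : (CoinSp ⊗[ℂ] WalkSp) ⊗[ℂ] (CoinSp ⊗[ℂ] WalkSp) →ₗ[ℂ]
    (CoinSp ⊗[ℂ] WalkSp) ⊗[ℂ] (CoinSp ⊗[ℂ] WalkSp) :=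
  TensorProduct.map (TensorProduct.map proj0 LinearMap.id)
    (TensorProduct.map proj0 LinearMap.id)


namespace QWaux

def cc : ℂ := (Real.sqrt 2 : ℝ) / 2

lemma hcc : cc * cc = 1 / 2 := by
  have h : (Real.sqrt 2 : ℝ) * Real.sqrt 2 = 2 := Real.mul_self_sqrt (by norm_num)
  simp only [cc]
  rw [div_mul_div_comm]
  norm_cast
  rw [h]
  norm_num

lemma coin_up : coinOp (Real.pi/4) up = cc • up + cc • dn := by
  ext i
  fin_cases i <;>
    simp [coinOp, up, dn, cc, Matrix.toLin'_apply, Matrix.mulVec, dotProduct,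
      Fin.sum_univ_two, Real.cos_pi_div_four, Real.sin_pi_div_four]

lemma coin_dn : coinOp (Real.pi/4) dn = cc • up - cc • dn := by
  ext i
  fin_cases i <;>
    simp [coinOp, up, dn, cc, Matrix.toLin'_apply, Matrix.mulVec, dotProduct,
      Fin.sum_univ_two, Real.cos_pi_div_four, Real.sin_pi_div_four]

lemma proj0_up : proj0 up = up := by
  ext i
  fin_cases i <;>
    simp [proj0, up, Matrix.toLin'_apply, Matrix.mulVec, dotProduct, Fin.sum_univ_two]

lemma proj0_dn : proj0 dn = 0 := by
  ext i
  fin_cases i <;>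
    simp [proj0, dn, Matrix.toLin'_apply, Matrix.mulVec, dotProduct, Fin.sum_univ_two]

lemma proj1_up : proj1 up = 0 := by
  ext i
  fin_cases i <;>
    simp [proj1, up, Matrix.toLin'_apply, Matrix.mulVec, dotProduct, Fin.sum_univ_two]

lemma proj1_dn : proj1 dn = dn := by
  ext i
  fin_cases i <;>
    simp [proj1, dn, Matrix.toLin'_apply, Matrix.mulVec, dotProduct, Fin.sum_univ_two]

lemma R_ket (i : ℤ) : Rshift (ket i) = ket (i + 1) := by
  simp only [Rshift, ket, Finsupp.lmapDomain_apply, Finsupp.mapDomain_single]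

lemma L_ket (i : ℤ) : Lshift (ket i) = ket (i - 1) := by
  simp only [Lshift, ket, Finsupp.lmapDomain_apply, Finsupp.mapDomain_single]

lemma S1_up (i : ℤ) : S1 (up ⊗ₜ[ℂ] ket i) = up ⊗ₜ[ℂ] ket (i + 1) := by
  simp [S1, TensorProduct.map_tmul, proj0_up, proj1_up, R_ket, L_ket]

lemma S1_dn (i : ℤ) : S1 (dn ⊗ₜ[ℂ] ket i) = dn ⊗ₜ[ℂ] ket (i - 1) := by
  simp [S1, TensorProduct.map_tmul, proj0_dn, proj1_dn, R_ket, L_ket]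

lemma U_up (i : ℤ) : Ustep (Real.pi/4) (up ⊗ₜ[ℂ] ket i) =
    cc • (up ⊗ₜ[ℂ] ket (i + 1)) + cc • (dn ⊗ₜ[ℂ] ket (i - 1)) := by
  simp only [Ustep, LinearMap.coe_comp, Function.comp_apply, TensorProduct.map_tmul,
    LinearMap.id_coe, id_eq, coin_up, add_tmul, ← smul_tmul', map_add, map_smul, S1_up, S1_dn]

lemma U_dn (i : ℤ) : Ustep (Real.pi/4) (dn ⊗ₜ[ℂ] ket i) =
    cc • (up ⊗ₜ[ℂ] ket (i + 1)) - cc • (dn ⊗ₜ[ℂ] ket (i - 1)) := by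
  simp only [Ustep, LinearMap.coe_comp, Function.comp_apply, TensorProduct.map_tmul,
    LinearMap.id_coe, id_eq, coin_dn, sub_tmul, ← smul_tmul', map_sub, map_smul, S1_up, S1_dn]

def P : CoinSp ⊗[ℂ] WalkSp →ₗ[ℂ] CoinSp ⊗[ℂ] WalkSp :=
  TensorProduct.map proj0 LinearMap.id

lemma P_up (i : ℤ) : P (up ⊗ₜ[ℂ] ket i) = up ⊗ₜ[ℂ] ket i := by
  simp [P, TensorProduct.map_tmul, proj0_up]

lemma PU2_up : P (Ustep (Real.pi/4) (Ustep (Real.pi/4) (up ⊗ₜ[ℂ] ket 0))) =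
    (1/2 : ℂ) • (up ⊗ₜ[ℂ] ket 2) + (1/2 : ℂ) • (up ⊗ₜ[ℂ] ket 0) := by
  rw [U_up]
  simp only [map_add, map_smul, map_sub, U_up, U_dn, P, TensorProduct.map_tmul, proj0_up,
    proj0_dn, LinearMap.id_coe, id_eq, TensorProduct.zero_tmul, smul_zero, smul_add,
    smul_sub, smul_smul, hcc, add_zero, sub_zero, zero_sub, zero_add]
  norm_num

lemma PU2_dn : P (Ustep (Real.pi/4) (Ustep (Real.pi/4) (dn ⊗ₜ[ℂ] ket 0))) =
    (1/2 : ℂ) • (up ⊗ₜ[ℂ] ket 2) - (1/2 : ℂ) • (up ⊗ₜ[ℂ] ket 0) := by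
  rw [U_dn]
  simp only [map_add, map_smul, map_sub, U_up, U_dn, P, TensorProduct.map_tmul, proj0_up,
    proj0_dn, LinearMap.id_coe, id_eq, TensorProduct.zero_tmul, smul_zero, smul_add,
    smul_sub, smul_smul, hcc, add_zero, sub_zero, zero_sub, zero_add]
  norm_num

end QWaux

/-- Eq. (17), first line: post-selecting the second-step anti-symmetric-coin
state with `M↑↑` yields the anti-symmetric (singlet-in-position) walker state
`(|0,2⟩ - |2,0⟩)/√2`, up to normalization. -/
theorem post_selected_second_step_antisymmetric_coin :
    Mupup (((calU (Real.pi / 4)) ^ 2) psiMinus) =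
      ((1 : ℂ) / (2 * Real.sqrt 2)) •
        ( (up ⊗ₜ[ℂ] ket 0) ⊗ₜ[ℂ] (up ⊗ₜ[ℂ] ket 2)
        - (up ⊗ₜ[ℂ] ket 2) ⊗ₜ[ℂ] (up ⊗ₜ[ℂ] ket 0)) := by

  have hs : (Real.sqrt 2 : ℂ) ≠ 0 := by
    norm_cast
    positivity
  have key : Mupup (((calU (Real.pi / 4)) ^ 2) psiMinus) =
      ((1 : ℂ) / Real.sqrt 2) •
        ((QWaux.P (Ustep (Real.pi/4) (Ustep (Real.pi/4) (up ⊗ₜ[ℂ] ket 0)))) ⊗ₜ[ℂ]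
          (QWaux.P (Ustep (Real.pi/4) (Ustep (Real.pi/4) (dn ⊗ₜ[ℂ] ket 0)))) -
         (QWaux.P (Ustep (Real.pi/4) (Ustep (Real.pi/4) (dn ⊗ₜ[ℂ] ket 0)))) ⊗ₜ[ℂ]
          (QWaux.P (Ustep (Real.pi/4) (Ustep (Real.pi/4) (up ⊗ₜ[ℂ] ket 0))))) := by
    simp only [pow_two, Module.End.mul_apply, psiMinus, map_smul, map_sub, calU,
      TensorProduct.map_tmul, Mupup]
    rfl
  rw [key, QWaux.PU2_up, QWaux.PU2_dn]
  simp only [TensorProduct.tmul_sub, TensorProduct.tmul_add, TensorProduct.sub_tmul,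
    TensorProduct.add_tmul, ← TensorProduct.smul_tmul', TensorProduct.tmul_smul,
    smul_smul, smul_sub, smul_add]
  match_scalars <;> field_simp <;> ring


end QuantumWalk
end

section
/- With the two-walker quantum-walk setup below, let Q₀ be the projector |↑⟩⟨↑| on C (Q₀ ↑ = ↑, Q₀ ↓ = 0) and let M↑↑ = (Q₀ ⊗ id_W) ⊗ (Q₀ ⊗ id_W) act on (C ⊗ W) ⊗ (C ⊗ W). Then post-selecting the second-step symmetric-coin state gives M↑↑ (𝒰(π/4)² ψ₀⁺) = (1/(2√2)) [ (↑⊗|2⟩)⊗(↑⊗|2⟩) − (↑⊗|0⟩)⊗(↑⊗|0⟩) ], i.e. the (unnormalized) walker state (|2,2⟩ − |0,0⟩)/√2 of Eq. (20), which is symmetric under exchange of the walkers. -/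
open TensorProduct

set_option maxSynthPendingDepth 5

noncomputable section QuantumWalk

-- Auxiliary lemmas

local notation "c" => ((Real.sqrt 2 : ℂ) / 2)

lemma proj0_up : proj0 up = up := by
  funext x; fin_cases x <;>
    simp [proj0, up, Matrix.toLin'_apply, Matrix.mulVec, dotProduct,
      Fin.sum_univ_two, Pi.single_apply]

lemma proj0_dn : proj0 dn = 0 := by
  funext x; fin_cases x <;>
    simp [proj0, dn, Matrix.toLin'_apply, Matrix.mulVec, dotProduct,
      Fin.sum_univ_two, Pi.single_apply]

lemma proj1_up : proj1 up = 0 := by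
  funext x; fin_cases x <;>
    simp [proj1, up, Matrix.toLin'_apply, Matrix.mulVec, dotProduct,
      Fin.sum_univ_two, Pi.single_apply]

lemma proj1_dn : proj1 dn = dn := by
  funext x; fin_cases x <;>
    simp [proj1, dn, Matrix.toLin'_apply, Matrix.mulVec, dotProduct,
      Fin.sum_univ_two, Pi.single_apply]

lemma R_ket (i : ℤ) : Rshift (ket i) = ket (i + 1) := by
  simp only [Rshift, ket, Finsupp.lmapDomain_apply, Finsupp.mapDomain_single]

lemma L_ket (i : ℤ) : Lshift (ket i) = ket (i - 1) := by
  simp only [Lshift, ket, Finsupp.lmapDomain_apply, Finsupp.mapDomain_single]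

lemma coin_up : coinOp (Real.pi / 4) up = c • up + c • dn := by
  funext x; fin_cases x <;>
    simp [coinOp, up, dn, Matrix.toLin'_apply, Matrix.mulVec, dotProduct,
      Fin.sum_univ_two, Pi.single_apply, Real.cos_pi_div_four, Real.sin_pi_div_four]

lemma coin_dn : coinOp (Real.pi / 4) dn = c • up - c • dn := by
  funext x; fin_cases x <;>
    simp [coinOp, up, dn, Matrix.toLin'_apply, Matrix.mulVec, dotProduct,
      Fin.sum_univ_two, Pi.single_apply, Real.cos_pi_div_four, Real.sin_pi_div_four]

lemma S1_up (i : ℤ) : S1 (up ⊗ₜ[ℂ] ket i) = up ⊗ₜ[ℂ] ket (i + 1) := by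
  simp [S1, proj0_up, proj1_up, R_ket, L_ket]

lemma S1_dn (i : ℤ) : S1 (dn ⊗ₜ[ℂ] ket i) = dn ⊗ₜ[ℂ] ket (i - 1) := by
  simp [S1, proj0_dn, proj1_dn, R_ket, L_ket]

lemma U_up (i : ℤ) : Ustep (Real.pi / 4) (up ⊗ₜ[ℂ] ket i) =
    c • (up ⊗ₜ[ℂ] ket (i + 1)) + c • (dn ⊗ₜ[ℂ] ket (i - 1)) := by
  simp [Ustep, coin_up, TensorProduct.add_tmul, ← TensorProduct.smul_tmul', map_smul,
    S1_up, S1_dn]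

lemma U_dn (i : ℤ) : Ustep (Real.pi / 4) (dn ⊗ₜ[ℂ] ket i) =
    c • (up ⊗ₜ[ℂ] ket (i + 1)) - c • (dn ⊗ₜ[ℂ] ket (i - 1)) := by
  simp [Ustep, coin_dn, TensorProduct.sub_tmul, ← TensorProduct.smul_tmul', map_smul,
    S1_up, S1_dn]

lemma cc : c * c = 1 / 2 := by
  have h : (Real.sqrt 2 : ℂ) * (Real.sqrt 2 : ℂ) = 2 := by
    norm_cast
    rw [Real.mul_self_sqrt (by norm_num)]
  rw [div_mul_div_comm, h]
  norm_num

lemma P_up (i : ℤ) : TensorProduct.map proj0 (LinearMap.id (R := ℂ) (M := WalkSp)) (up ⊗ₜ[ℂ] ket i)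
    = up ⊗ₜ[ℂ] ket i := by
  simp [proj0_up]

lemma P_dn (i : ℤ) : TensorProduct.map proj0 (LinearMap.id (R := ℂ) (M := WalkSp)) (dn ⊗ₜ[ℂ] ket i)
    = (0 : ℂ) • (up ⊗ₜ[ℂ] ket i) := by
  rw [TensorProduct.map_tmul, proj0_dn, ← zero_smul ℂ up,
    TensorProduct.smul_tmul', LinearMap.id_coe, id_eq]

set_option maxHeartbeats 1000000 in
lemma PU2_up : TensorProduct.map proj0 (LinearMap.id (R := ℂ) (M := WalkSp))
    ((Ustep (Real.pi / 4) ^ 2) (up ⊗ₜ[ℂ] ket 0)) =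
    ((1 : ℂ) / 2) • (up ⊗ₜ[ℂ] ket 2 + up ⊗ₜ[ℂ] ket 0) := by
  rw [pow_two, Module.End.mul_apply]
  simp only [U_up, U_dn, map_add, map_sub, map_smul, P_up, P_dn, smul_add,
    smul_sub, smul_smul, zero_smul, smul_zero, add_zero, sub_zero, cc]
  norm_num

set_option maxHeartbeats 1000000 in
lemma PU2_dn : TensorProduct.map proj0 (LinearMap.id (R := ℂ) (M := WalkSp))
    ((Ustep (Real.pi / 4) ^ 2) (dn ⊗ₜ[ℂ] ket 0)) =
    ((1 : ℂ) / 2) • (up ⊗ₜ[ℂ] ket 2 - up ⊗ₜ[ℂ] ket 0) := by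
  rw [pow_two, Module.End.mul_apply]
  simp only [U_up, U_dn, map_add, map_sub, map_smul, P_up, P_dn, smul_add,
    smul_sub, smul_smul, zero_smul, smul_zero, add_zero, sub_zero, cc]
  norm_num

lemma sqrt2_ne : (Real.sqrt 2 : ℂ) ≠ 0 := by
  norm_cast
  positivity

/-- Eq. (20), first line: post-selecting the second-step symmetric-coin state
with `M↑↑` yields the symmetric walker state `(|2,2⟩ - |0,0⟩)/√2`, up to
normalization. -/
theorem post_selected_second_step_symmetric_coin :
    Mupup (((calU (Real.pi / 4)) ^ 2) psiPlus) =
      ((1 : ℂ) / (2 * Real.sqrt 2)) •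
        ( (up ⊗ₜ[ℂ] ket 2) ⊗ₜ[ℂ] (up ⊗ₜ[ℂ] ket 2)
        - (up ⊗ₜ[ℂ] ket 0) ⊗ₜ[ℂ] (up ⊗ₜ[ℂ] ket 0)) := by
  rw [psiPlus, calU, TensorProduct.map_pow, map_smul, map_add,
    TensorProduct.map_tmul, TensorProduct.map_tmul, Mupup, map_smul, map_add,
    TensorProduct.map_tmul, TensorProduct.map_tmul, PU2_up, PU2_dn]
  have h := sqrt2_ne
  simp only [TensorProduct.tmul_smul, ← TensorProduct.smul_tmul',
    TensorProduct.tmul_sub, TensorProduct.tmul_add, TensorProduct.sub_tmul,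
    TensorProduct.add_tmul, smul_add, smul_sub, smul_smul]
  match_scalars <;> field_simp <;> ring

end QuantumWalk
end
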